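/- Let G be a parity game, D an α-dominion in G, and D★ := atr^α(D) its α-attractor in G. Then D★ ⊆ Wn_α(G) and, for each player β ∈ {0,1}, the winning region of β in the subgame G ∖ D★ equals Wn_β(G) ∖ D★; that is, a position of the subgame G ∖ D★ is winning for β in G ∖ D★ if and only if it is winning for β in G. -/
import Mathlib


open Filter Set

/-- A parity game: disjoint finite sets of positions of players 0 and 1, a left-total
move relation among positions, and a priority function. -/
structure PGame (V : Type*) where
  pos0 : Set V
  pos1 : Set V
  mv : V → V → Prop
  pr : V → ℕ
  disj : Disjoint pos0 pos1
  finpos : (pos0 ∪ pos1).Finite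
  mv_mem : ∀ ⦃v u : V⦄, mv v u → v ∈ pos0 ∪ pos1 ∧ u ∈ pos0 ∪ pos1
  leftTotal : ∀ v ∈ pos0 ∪ pos1, ∃ u, mv v u

namespace PGame

variable {V : Type*}

/-- The set of positions of the game. -/
def pos (G : PGame V) : Set V := G.pos0 ∪ G.pos1

/-- The positions of player `α` (`α ∈ {0,1}`; the opponent of `α` is `1 - α`). -/
def posOf (G : PGame V) (α : ℕ) : Set V := if α = 0 then G.pos0 else G.pos1

/-- The maximal priority `pr(G)` of the game. -/
noncomputable def maxPr (G : PGame V) : ℕ := sSup (G.pr '' G.pos)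

/-- `pre^α(U)`: positions from which player `α` can force reaching `U` in one move. -/
def pre (G : PGame V) (α : ℕ) (U : Set V) : Set V :=
  {v ∈ G.posOf α | ∃ u ∈ U, G.mv v u} ∪
    {v ∈ G.posOf (1 - α) | ∀ u, G.mv v u → u ∈ U}

lemma pre_mono (G : PGame V) (α : ℕ) : Monotone (G.pre α) := by
  intro U U' h v hv
  rcases hv with ⟨h1, u, hu, hm⟩ | ⟨h1, h2⟩
  · exact Or.inl ⟨h1, u, h hu, hm⟩
  · exact Or.inr ⟨h1, fun u hm => h (h2 u hm)⟩

/-- `atr^α(A)`: the `α`-attractor of `A`, the least fixed point of `U ↦ A ∪ pre^α(U)`. -/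
noncomputable def atr (G : PGame V) (α : ℕ) (A : Set V) : Set V :=
  OrderHom.lfp ⟨fun U => A ∪ G.pre α U, fun U U' h => union_subset_union subset_rfl (G.pre_mono α h)⟩

/-- `A` is `α`-maximal if it coincides with its own `α`-attractor. -/
def IsMaximal (G : PGame V) (α : ℕ) (A : Set V) : Prop := G.atr α A = A

/-- `esc^α(Q)`: the `α`-escape of `Q`. -/
def esc (G : PGame V) (α : ℕ) (Q : Set V) : Set V := G.pre α (G.pos \ Q) ∩ Q

/-- `int^α(Q)`: the `α`-interior of `Q`. -/
def intOf (G : PGame V) (α : ℕ) (Q : Set V) : Set V := (Q ∩ G.posOf α) \ G.esc α Q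

/-- A positional `α`-strategy on `U`: a partial function (encoded with `Option`) from
`U ∩ Pos_α` to `U` compatible with the move relation. -/
def IsStrat (G : PGame V) (α : ℕ) (U : Set V) (σ : V → Option V) : Prop :=
  ∀ v u, σ v = some u → v ∈ U ∩ G.posOf α ∧ u ∈ U ∧ G.mv v u

-- One step of the play function: from `v`, player 0 positions move according to `σ0`,
-- the others according to `σ1`.
open Classical in
noncomputable def step (G : PGame V) (σ0 σ1 : V → Option V) (v : V) : Option V :=
  if v ∈ G.pos0 then σ0 v else σ1 v

/-- The maximal play induced by the pair of strategies `(σ0, σ1)` from `v`,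
as a sequence of `Option`s (`none` from the point the play has stopped on). -/
noncomputable def play (G : PGame V) (σ0 σ1 : V → Option V) (v : V) : ℕ → Option V
  | 0 => some v
  | n + 1 => (G.play σ0 σ1 v n).bind (G.step σ0 σ1)

/-- The priorities visited along a play (defaulting to `0` after the play has stopped). -/
noncomputable def playPr (G : PGame V) (σ0 σ1 : V → Option V) (v : V) (n : ℕ) : ℕ :=
  ((G.play σ0 σ1 v n).map G.pr).getD 0

/-- `Q` is a quasi `α`-dominion in `G`. -/
noncomputable def QuasiDom (G : PGame V) (α : ℕ) (Q : Set V) : Prop :=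
  Q.Nonempty ∧ Q ⊆ G.pos ∧
  ∃ σa : V → Option V, G.IsStrat α Q σa ∧
    ∀ σb : V → Option V, G.IsStrat (1 - α) Q σb →
      G.intOf (1 - α) Q ⊆ {v | (σb v).isSome} →
      ∀ v ∈ Q,
        (((∀ n, (G.play (if α = 0 then σa else σb) (if α = 0 then σb else σa) v n).isSome) →
          Filter.limsup (G.playPr (if α = 0 then σa else σb) (if α = 0 then σb else σa) v)
            Filter.atTop % 2 = α) ∧
        (∀ n u, G.play (if α = 0 then σa else σb) (if α = 0 then σb else σa) v n = some u →
          G.play (if α = 0 then σa else σb) (if α = 0 then σb else σa) v (n + 1) = none →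
          u ∈ G.esc (1 - α) Q))

/-- A quasi `α`-dominion `R` is an `α`-region of `G` when `pr(G) ≡₂ α` and all the
positions in its `ᾱ`-escape have the maximal priority `pr(G)`. -/
noncomputable def IsRegion (G : PGame V) (α : ℕ) (R : Set V) : Prop :=
  G.QuasiDom α R ∧ G.maxPr % 2 = α ∧ ∀ v ∈ G.esc (1 - α) R, G.pr v = G.maxPr

/-- `D` is an `α`-dominion in `G`: player `α` has a strategy defined on all of
`D ∩ Pos_α` such that all induced paths starting in `D` stay in `D` forever and are
winning for `α`. -/
noncomputable def Dominion (G : PGame V) (α : ℕ) (D : Set V) : Prop :=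
  D ⊆ G.pos ∧
  ∃ σ : V → V, (∀ v ∈ D ∩ G.posOf α, σ v ∈ D ∧ G.mv v (σ v)) ∧
    ∀ π : ℕ → V, π 0 ∈ D →
      (∀ i, (π i ∈ G.posOf α → π (i + 1) = σ (π i)) ∧
            (π i ∈ G.posOf (1 - α) → G.mv (π i) (π (i + 1)))) →
      (∀ i, π i ∈ D) ∧ Filter.limsup (fun i => G.pr (π i)) Filter.atTop % 2 = α

/-- The winning region of player `α` in `G`. -/
noncomputable def Win (G : PGame V) (α : ℕ) : Set V :=
  {v ∈ G.pos | ∃ σ : V → V, (∀ u ∈ G.posOf α, G.mv u (σ u)) ∧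
    ∀ π : ℕ → V, π 0 = v →
      (∀ i, (π i ∈ G.posOf α → π (i + 1) = σ (π i)) ∧
            (π i ∈ G.posOf (1 - α) → G.mv (π i) (π (i + 1)))) →
      Filter.limsup (fun i => G.pr (π i)) Filter.atTop % 2 = α}

/-- The set of positions of the subgame `G ∖ U`: the largest subset of `Pos ∖ U` on
which the restricted move relation is still left-total. -/
def subPos (G : PGame V) (U : Set V) : Set V :=
  ⋃₀ {S : Set V | S ⊆ G.pos \ U ∧ ∀ v ∈ S, ∃ u ∈ S, G.mv v u}

lemma subPos_subset (G : PGame V) (U : Set V) : G.subPos U ⊆ G.pos \ U := by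
  rintro v ⟨S, ⟨hS1, _⟩, hvS⟩
  exact hS1 hvS

lemma subPos_step (G : PGame V) (U : Set V) :
    ∀ v ∈ G.subPos U, ∃ u ∈ G.subPos U, G.mv v u := by
  rintro v ⟨S, hS, hvS⟩
  rcases hS.2 v hvS with ⟨u, huS, hm⟩
  exact ⟨u, ⟨S, hS, huS⟩, hm⟩

/-- The subgame `G ∖ U`: the maximal subgame of `G` whose positions are contained in
`Pos ∖ U`, with the restricted move relation. -/
noncomputable def sub (G : PGame V) (U : Set V) : PGame V where
  pos0 := G.pos0 ∩ G.subPos U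
  pos1 := G.pos1 ∩ G.subPos U
  mv v u := G.mv v u ∧ v ∈ G.subPos U ∧ u ∈ G.subPos U
  pr := G.pr
  disj := G.disj.mono inter_subset_left inter_subset_left
  finpos := G.finpos.subset (union_subset_union inter_subset_left inter_subset_left)
  mv_mem := by
    rintro v u ⟨hm, hv, hu⟩
    have hv' : v ∈ G.pos := (G.subPos_subset U hv).1
    have hu' : u ∈ G.pos := (G.subPos_subset U hu).1
    constructor
    · rcases hv' with h | h
      · exact Or.inl ⟨h, hv⟩
      · exact Or.inr ⟨h, hv⟩
    · rcases hu' with h | h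
      · exact Or.inl ⟨h, hu⟩
      · exact Or.inr ⟨h, hu⟩
  leftTotal := by
    intro v hv
    have hv' : v ∈ G.subPos U := by
      rcases hv with ⟨_, h⟩ | ⟨_, h⟩ <;> exact h
    rcases G.subPos_step U v hv' with ⟨u, hu, hm⟩
    exact ⟨u, hm, hv', hu⟩

end PGame


namespace PGame

variable {V : Type*}

lemma posOf_subset_pos (G : PGame V) (α : ℕ) : G.posOf α ⊆ G.pos := by
  unfold posOf pos
  split
  · exact subset_union_left
  · exact subset_union_right

lemma posOf_opp_disj (G : PGame V) {α : ℕ} (hα : α = 0 ∨ α = 1) {v : V}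
    (h1 : v ∈ G.posOf α) (h2 : v ∈ G.posOf (1 - α)) : False := by
  rcases hα with rfl | rfl
  · simp [posOf] at h1 h2
    exact G.disj.le_bot ⟨h1, h2⟩
  · simp [posOf] at h1 h2
    exact G.disj.le_bot ⟨h2, h1⟩

lemma pos_cases (G : PGame V) {α : ℕ} (hα : α = 0 ∨ α = 1) {v : V}
    (hv : v ∈ G.pos) : v ∈ G.posOf α ∨ v ∈ G.posOf (1 - α) := by
  rcases hα with rfl | rfl
  · simpa [posOf, pos] using hv
  · simp [posOf, pos] at hv ⊢
    exact hv.symm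

lemma pre_subset_pos (G : PGame V) (α : ℕ) (U : Set V) : G.pre α U ⊆ G.pos := by
  rintro v (⟨h, -⟩ | ⟨h, -⟩) <;> exact G.posOf_subset_pos _ h

lemma atr_fix (G : PGame V) (α : ℕ) (D : Set V) :
    D ∪ G.pre α (G.atr α D) = G.atr α D :=
  OrderHom.map_lfp (⟨fun U => D ∪ G.pre α U,
    fun U U' h => union_subset_union subset_rfl (G.pre_mono α h)⟩ : Set V →o Set V)

lemma subset_atr (G : PGame V) (α : ℕ) (D : Set V) : D ⊆ G.atr α D := by
  conv_rhs => rw [← G.atr_fix α D]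
  exact subset_union_left

lemma atr_subset_pos (G : PGame V) (α : ℕ) {D : Set V} (hD : D ⊆ G.pos) :
    G.atr α D ⊆ G.pos :=
  OrderHom.lfp_le _ (union_subset hD (G.pre_subset_pos α _))

/-- The `n`-th stage of the attractor computation. -/
def atrIter (G : PGame V) (α : ℕ) (D : Set V) (n : ℕ) : Set V :=
  (fun U => D ∪ G.pre α U)^[n] ∅

lemma atrIter_succ (G : PGame V) (α : ℕ) (D : Set V) (n : ℕ) :
    G.atrIter α D (n + 1) = D ∪ G.pre α (G.atrIter α D n) :=
  Function.iterate_succ_apply' _ _ _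

lemma atrIter_le_succ (G : PGame V) (α : ℕ) (D : Set V) (n : ℕ) :
    G.atrIter α D n ⊆ G.atrIter α D (n + 1) := by
  induction n with
  | zero => simp [atrIter]
  | succ n ih =>
    rw [atrIter_succ, atrIter_succ]
    exact union_subset_union subset_rfl (G.pre_mono α ih)

lemma atrIter_mono (G : PGame V) (α : ℕ) (D : Set V) {n m : ℕ} (h : n ≤ m) :
    G.atrIter α D n ⊆ G.atrIter α D m := by
  induction h with
  | refl => exact subset_rfl
  | step h ih => exact ih.trans (G.atrIter_le_succ α D _)

lemma atrIter_subset_atr (G : PGame V) (α : ℕ) (D : Set V) (n : ℕ) :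
    G.atrIter α D n ⊆ G.atr α D := by
  induction n with
  | zero => simp [atrIter]
  | succ n ih =>
    rw [atrIter_succ, ← G.atr_fix α D]
    exact union_subset_union subset_rfl (G.pre_mono α ih)

lemma atr_eq_iUnion (G : PGame V) (α : ℕ) (D : Set V) :
    G.atr α D = ⋃ n, G.atrIter α D n := by
  refine le_antisymm (OrderHom.lfp_le _ ?_) (iUnion_subset (G.atrIter_subset_atr α D))
  rintro v (hv | hv)
  · exact mem_iUnion.mpr ⟨1, by rw [atrIter_succ]; exact Or.inl hv⟩
  · rcases hv with ⟨hvα, u, hu, hm⟩ | ⟨hvα, hall⟩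
    · rcases mem_iUnion.mp hu with ⟨n, hn⟩
      exact mem_iUnion.mpr ⟨n + 1, by
        rw [atrIter_succ]; exact Or.inr (Or.inl ⟨hvα, u, hn, hm⟩)⟩
    · -- all successors are in the union; use finiteness to find a common stage
      have hSfin : {u | G.mv v u}.Finite :=
        G.finpos.subset (fun u hu => (G.mv_mem hu).2)
      have hex : ∀ u ∈ {u | G.mv v u}, ∃ n, u ∈ G.atrIter α D n := by
        intro u hu
        exact mem_iUnion.mp (hall u hu)
      choose! f hf using hex
      obtain ⟨T, hT⟩ := hSfin.exists_finset_coe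
      refine mem_iUnion.mpr ⟨T.sup f + 1, ?_⟩
      rw [atrIter_succ]
      refine Or.inr (Or.inr ⟨hvα, fun u hm => ?_⟩)
      have huS : u ∈ {u | G.mv v u} := hm
      have huT : u ∈ T := by rw [← Finset.mem_coe, hT]; exact huS
      exact G.atrIter_mono α D (Finset.le_sup (f := f) huT) (hf u huS)

open Classical in
/-- The stage at which a position enters the attractor. -/
noncomputable def rank (G : PGame V) (α : ℕ) (D : Set V) (v : V) : ℕ :=
  if h : ∃ n, v ∈ G.atrIter α D n then Nat.find h else 0

lemma rank_spec (G : PGame V) (α : ℕ) (D : Set V) {v : V}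
    (hv : v ∈ G.atr α D) : v ∈ G.atrIter α D (G.rank α D v) := by
  classical
  have h : ∃ n, v ∈ G.atrIter α D n := by
    rw [G.atr_eq_iUnion α D] at hv
    exact mem_iUnion.mp hv
  rw [rank, dif_pos h]
  exact Nat.find_spec h

lemma rank_min (G : PGame V) (α : ℕ) (D : Set V) {v : V} {n : ℕ}
    (hv : v ∈ G.atrIter α D n) : G.rank α D v ≤ n := by
  classical
  have h : ∃ n, v ∈ G.atrIter α D n := ⟨n, hv⟩
  rw [rank, dif_pos h]
  exact Nat.find_min' h hv

lemma rank_pos (G : PGame V) (α : ℕ) (D : Set V) {v : V}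
    (hv : v ∈ G.atr α D) : 1 ≤ G.rank α D v := by
  by_contra h
  have h0 : G.rank α D v = 0 := by omega
  have := G.rank_spec α D hv
  rw [h0] at this
  simp [atrIter] at this

/-- From a position of player `α` in the attractor but not in `D`, there is a
move decreasing the rank. -/
lemma escape_exists (G : PGame V) {α : ℕ} (hα : α = 0 ∨ α = 1) {D : Set V} {v : V}
    (hv : v ∈ G.atr α D) (hvD : v ∉ D) (hvα : v ∈ G.posOf α) :
    ∃ u, G.mv v u ∧ u ∈ G.atr α D ∧ G.rank α D u < G.rank α D v := by
  have hs := G.rank_spec α D hv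
  have h1 := G.rank_pos α D hv
  obtain ⟨k, hk⟩ : ∃ k, G.rank α D v = k + 1 := ⟨G.rank α D v - 1, by omega⟩
  rw [hk, atrIter_succ] at hs
  rcases hs with hs | hs
  · exact absurd hs hvD
  rcases hs with ⟨-, u, hu, hm⟩ | ⟨h2, -⟩
  · exact ⟨u, hm, G.atrIter_subset_atr α D k hu, by
      have := G.rank_min α D hu; omega⟩
  · exact absurd h2 (fun h2 => G.posOf_opp_disj hα hvα h2)

/-- From a position of the opponent in the attractor but not in `D`, every
move decreases the rank. -/
lemma opp_forced (G : PGame V) {α : ℕ} (hα : α = 0 ∨ α = 1) {D : Set V} {v : V}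
    (hv : v ∈ G.atr α D) (hvD : v ∉ D) (hvb : v ∈ G.posOf (1 - α)) :
    ∀ u, G.mv v u → u ∈ G.atr α D ∧ G.rank α D u < G.rank α D v := by
  have hs := G.rank_spec α D hv
  have h1 := G.rank_pos α D hv
  obtain ⟨k, hk⟩ : ∃ k, G.rank α D v = k + 1 := ⟨G.rank α D v - 1, by omega⟩
  rw [hk, atrIter_succ] at hs
  rcases hs with hs | hs
  · exact absurd hs hvD
  rcases hs with ⟨h2, -⟩ | ⟨-, hall⟩
  · exact absurd h2 (fun h2 => G.posOf_opp_disj hα h2 hvb)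
  · intro u hm
    have hu := hall u hm
    exact ⟨G.atrIter_subset_atr α D k hu, by have := G.rank_min α D hu; omega⟩

/-- A position of player `α` outside the attractor has no move into the attractor. -/
lemma noescape (G : PGame V) (α : ℕ) (D : Set V) {v u : V}
    (hvα : v ∈ G.posOf α) (hv : v ∉ G.atr α D) (hm : G.mv v u) : u ∉ G.atr α D := by
  intro hu
  apply hv
  rw [← G.atr_fix α D]
  exact Or.inr (Or.inl ⟨hvα, u, hu, hm⟩)

/-- `D` is closed under the opponent's moves: any move of the opponent from `D`
stays in `D`. -/
lemma dominion_opp_closed (G : PGame V) {α : ℕ} (hα : α = 0 ∨ α = 1) {D : Set V}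
    (hD : G.Dominion α D) {v w : V}
    (hv : v ∈ D) (hvb : v ∈ G.posOf (1 - α)) (hm : G.mv v w) : w ∈ D := by
  classical
  obtain ⟨hDpos, σ, hσ1, hσ2⟩ := hD
  -- extend the play `v, w` arbitrarily but consistently
  set nxt : V → V := fun x =>
    if x ∈ G.posOf α then σ x
    else if h : x ∈ G.pos then (G.leftTotal x h).choose else x with hnxt
  have hnxt_good : ∀ x, (x ∈ G.posOf α → nxt x = σ x) ∧
      (x ∈ G.posOf (1 - α) → G.mv x (nxt x)) := by
    intro x
    constructor
    · intro hx; simp [hnxt, hx]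
    · intro hx
      have hx' : x ∉ G.posOf α := fun h => G.posOf_opp_disj hα h hx
      have hxp : x ∈ G.pos := G.posOf_subset_pos _ hx
      simp only [hnxt, if_neg hx', dif_pos hxp]
      exact (G.leftTotal x hxp).choose_spec
  set aux : ℕ → V := fun k => Nat.rec w (fun _ ih => nxt ih) k with haux
  set π : ℕ → V := fun n => Nat.rec v (fun k _ => aux k) n with hπ
  have hπ0 : π 0 = v := rfl
  have hπ1 : π 1 = w := rfl
  have hπs : ∀ k, π (k + 2) = nxt (π (k + 1)) := fun k => rfl
  have hcons : ∀ i, (π i ∈ G.posOf α → π (i + 1) = σ (π i)) ∧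
      (π i ∈ G.posOf (1 - α) → G.mv (π i) (π (i + 1))) := by
    intro i
    rcases i with _ | k
    · constructor
      · intro h; exact absurd h (fun h => G.posOf_opp_disj hα h (hπ0 ▸ hvb))
      · intro _; exact hm
    · rw [hπs]
      exact ⟨(hnxt_good (π (k + 1))).1, (hnxt_good (π (k + 1))).2⟩
  have := (hσ2 π (hπ0 ▸ hv) hcons).1 1
  rwa [hπ1] at this

/-- Player `α` has a strategy winning from every position of the attractor of a
dominion `D`: force the play into `D` (decreasing the rank) and then follow the
dominion strategy. -/
lemma exists_attractor_strategy (G : PGame V) {α : ℕ} (hα : α = 0 ∨ α = 1) {D : Set V}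
    (hD : G.Dominion α D) :
    ∃ σA : V → V, (∀ u ∈ G.posOf α, G.mv u (σA u)) ∧
      ∀ π : ℕ → V, π 0 ∈ G.atr α D →
        (∀ i, (π i ∈ G.atr α D → π i ∈ G.posOf α → π (i + 1) = σA (π i)) ∧
              (π i ∈ G.posOf (1 - α) → G.mv (π i) (π (i + 1)))) →
        (∀ i, π i ∈ G.atr α D) ∧
          Filter.limsup (fun i => G.pr (π i)) Filter.atTop % 2 = α := by
  classical
  have hDcl : ∀ v w, v ∈ D → v ∈ G.posOf (1 - α) → G.mv v w → w ∈ D :=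
    fun v w hv hvb hm => G.dominion_opp_closed hα hD hv hvb hm
  obtain ⟨hDpos, σ, hσ1, hσ2⟩ := hD
  set σA : V → V := fun v =>
    if hv : v ∈ D ∩ G.posOf α then σ v
    else if hv2 : v ∈ G.atr α D ∧ v ∉ D ∧ v ∈ G.posOf α then
      (G.escape_exists hα hv2.1 hv2.2.1 hv2.2.2).choose
    else if hv3 : v ∈ G.pos then (G.leftTotal v hv3).choose
    else v with hσA
  have hbr1 : ∀ v, v ∈ D → v ∈ G.posOf α → σA v = σ v := by
    intro v h1 h2
    simp only [hσA]
    rw [dif_pos ⟨h1, h2⟩]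
  have hbr2 : ∀ v (hv : v ∈ G.atr α D) (hv1 : v ∉ D) (hv2 : v ∈ G.posOf α),
      σA v = (G.escape_exists hα hv hv1 hv2).choose := by
    intro v h1 h2 h3
    simp only [hσA]
    rw [dif_neg (by rintro ⟨hd, -⟩; exact h2 hd), dif_pos ⟨h1, h2, h3⟩]
  have hmv : ∀ u ∈ G.posOf α, G.mv u (σA u) := by
    intro u hu
    by_cases h1 : u ∈ D
    · rw [hbr1 u h1 hu]
      exact (hσ1 u ⟨h1, hu⟩).2
    · by_cases h2 : u ∈ G.atr α D
      · rw [hbr2 u h2 h1 hu]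
        exact (G.escape_exists hα h2 h1 hu).choose_spec.1
      · have hup : u ∈ G.pos := G.posOf_subset_pos α hu
        simp only [hσA]
        rw [dif_neg (by rintro ⟨hd, -⟩; exact h1 hd),
          dif_neg (by rintro ⟨ha, -⟩; exact h2 ha), dif_pos hup]
        exact (G.leftTotal u hup).choose_spec
  refine ⟨σA, hmv, ?_⟩
  intro π h0 hcons
  have step : ∀ v w, v ∈ G.atr α D → (v ∈ G.posOf α → w = σA v) →
      (v ∈ G.posOf (1 - α) → G.mv v w) →
      (v ∈ D → w ∈ D) ∧
        (v ∉ D → w ∈ G.atr α D ∧ G.rank α D w < G.rank α D v) := by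
    intro v w hv hwα hwβ
    have hvp : v ∈ G.pos := G.atr_subset_pos α hDpos hv
    rcases G.pos_cases hα hvp with hvα | hvβ
    · have hw : w = σA v := hwα hvα
      by_cases hvD : v ∈ D
      · refine ⟨fun _ => ?_, fun h => absurd hvD h⟩
        rw [hw, hbr1 v hvD hvα]
        exact (hσ1 v ⟨hvD, hvα⟩).1
      · refine ⟨fun h => absurd h hvD, fun _ => ?_⟩
        rw [hw, hbr2 v hv hvD hvα]
        exact (G.escape_exists hα hv hvD hvα).choose_spec.2
    · have hm := hwβ hvβ
      by_cases hvD : v ∈ D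
      · exact ⟨fun _ => hDcl v w hvD hvβ hm, fun h => absurd hvD h⟩
      · exact ⟨fun h => absurd h hvD, fun _ => G.opp_forced hα hv hvD hvβ w hm⟩
  have hall : ∀ i, π i ∈ G.atr α D := by
    intro i
    induction i with
    | zero => exact h0
    | succ i ih =>
      have hs := step (π i) (π (i + 1)) ih ((hcons i).1 ih) ((hcons i).2)
      by_cases hd : π i ∈ D
      · exact G.subset_atr α D (hs.1 hd)
      · exact (hs.2 hd).1
  refine ⟨hall, ?_⟩
  have reachD : ∃ N, π N ∈ D := by
    by_contra h
    push_neg at h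
    have dec : ∀ i, G.rank α D (π (i + 1)) < G.rank α D (π i) := fun i =>
      ((step (π i) (π (i + 1)) (hall i) ((hcons i).1 (hall i)) ((hcons i).2)).2 (h i)).2
    have key : ∀ n, G.rank α D (π n) + n ≤ G.rank α D (π 0) := by
      intro n
      induction n with
      | zero => omega
      | succ n ih => have := dec n; omega
    have := key (G.rank α D (π 0) + 1)
    omega
  obtain ⟨N, hN⟩ := reachD
  set π' : ℕ → V := fun j => π (j + N) with hπ'
  have htail : ∀ j, π' j ∈ D := by
    intro j
    induction j with
    | zero => show π (0 + N) ∈ D; rw [Nat.zero_add]; exact hN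
    | succ j ih =>
      have hs := step (π (j + N)) (π (j + N + 1)) (hall _)
        ((hcons (j + N)).1 (hall _)) ((hcons (j + N)).2)
      show π (j + 1 + N) ∈ D
      have he : j + 1 + N = j + N + 1 := by omega
      rw [he]
      exact hs.1 ih
  have htc : ∀ j, (π' j ∈ G.posOf α → π' (j + 1) = σ (π' j)) ∧
      (π' j ∈ G.posOf (1 - α) → G.mv (π' j) (π' (j + 1))) := by
    intro j
    constructor
    · intro hj
      have h1 : π (j + N + 1) = σA (π (j + N)) := (hcons (j + N)).1 (hall _) hj
      show π (j + 1 + N) = σ (π (j + N))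
      have he : j + 1 + N = j + N + 1 := by omega
      rw [he, h1, hbr1 _ (htail j) hj]
    · intro hj
      have := (hcons (j + N)).2 hj
      show G.mv (π (j + N)) (π (j + 1 + N))
      have he : j + 1 + N = j + N + 1 := by omega
      rw [he]
      exact this
  have hlim := (hσ2 π' (htail 0) htc).2
  have hshift := Filter.limsup_nat_add (fun i => G.pr (π i)) N
  rw [← hshift]
  exact hlim

/-- The positions of the subgame obtained by removing an attractor are exactly
the positions outside the attractor. -/
lemma subPos_atr (G : PGame V) {α : ℕ} (hα : α = 0 ∨ α = 1) (D : Set V) :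
    G.subPos (G.atr α D) = G.pos \ G.atr α D := by
  refine le_antisymm (G.subPos_subset _) ?_
  intro v hv
  refine ⟨G.pos \ G.atr α D, ⟨subset_rfl, ?_⟩, hv⟩
  rintro w ⟨hwp, hwa⟩
  rcases G.pos_cases hα hwp with hwα | hwβ
  · obtain ⟨u, hm⟩ := G.leftTotal w hwp
    exact ⟨u, ⟨(G.mv_mem hm).2, G.noescape α D hwα hwa hm⟩, hm⟩
  · by_contra h
    push_neg at h
    apply hwa
    rw [← G.atr_fix α D]
    refine Or.inr (Or.inr ⟨hwβ, fun u hm => ?_⟩)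
    by_contra hu
    exact h u ⟨(G.mv_mem hm).2, hu⟩ hm

lemma sub_posOf (G : PGame V) (U : Set V) (β : ℕ) :
    (G.sub U).posOf β = G.posOf β ∩ G.subPos U := by
  unfold posOf
  split <;> rfl

lemma sub_pos (G : PGame V) (U : Set V) : (G.sub U).pos = G.subPos U := by
  show (G.pos0 ∩ G.subPos U) ∪ (G.pos1 ∩ G.subPos U) = G.subPos U
  rw [← union_inter_distrib_right]
  exact inter_eq_right.mpr (fun x hx => (G.subPos_subset U hx).1)

/-- From a winning position, extract the set of positions from which the same
strategy wins, together with its closure properties. -/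
lemma win_forward (G : PGame V) {β : ℕ} (hβ : β = 0 ∨ β = 1) {v : V} (hv : v ∈ G.Win β) :
    ∃ (W : Set V) (σ : V → V), v ∈ W ∧ W ⊆ G.Win β ∧ W ⊆ G.pos ∧
      (∀ u ∈ G.posOf β, G.mv u (σ u)) ∧
      (∀ u, u ∈ W → u ∈ G.posOf β → σ u ∈ W) ∧
      (∀ u w, u ∈ W → u ∈ G.posOf (1 - β) → G.mv u w → w ∈ W) ∧
      (∀ u ∈ W, ∀ π : ℕ → V, π 0 = u →
        (∀ i, (π i ∈ G.posOf β → π (i + 1) = σ (π i)) ∧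
              (π i ∈ G.posOf (1 - β) → G.mv (π i) (π (i + 1)))) →
        Filter.limsup (fun i => G.pr (π i)) Filter.atTop % 2 = β) := by
  obtain ⟨hvp, σ, hσm, hσw⟩ := hv
  set W : Set V := {u | u ∈ G.pos ∧ ∀ π : ℕ → V, π 0 = u →
    (∀ i, (π i ∈ G.posOf β → π (i + 1) = σ (π i)) ∧
          (π i ∈ G.posOf (1 - β) → G.mv (π i) (π (i + 1)))) →
    Filter.limsup (fun i => G.pr (π i)) Filter.atTop % 2 = β} with hW
  have prepend : ∀ u w, u ∈ W → (u ∈ G.posOf β → w = σ u) →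
      (u ∈ G.posOf (1 - β) → G.mv u w) → w ∈ G.pos → w ∈ W := by
    intro u w hu hwβ hwo hwp
    refine ⟨hwp, ?_⟩
    intro π' h0 hc
    set π : ℕ → V := fun n => Nat.rec u (fun k _ => π' k) n with hπdef
    have hcons : ∀ i, (π i ∈ G.posOf β → π (i + 1) = σ (π i)) ∧
        (π i ∈ G.posOf (1 - β) → G.mv (π i) (π (i + 1))) := by
      intro i
      rcases i with _ | k
      · constructor
        · intro h
          show π' 0 = σ u
          rw [h0]
          exact hwβ h
        · intro h
          show G.mv u (π' 0)
          rw [h0]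
          exact hwo h
      · exact ⟨(hc k).1, (hc k).2⟩
    have := hu.2 π rfl hcons
    have hshift := Filter.limsup_nat_add (fun i => G.pr (π i)) 1
    have heq : (fun i => G.pr (π' i)) = (fun i => G.pr (π (i + 1))) := rfl
    rw [heq, hshift]
    exact this
  refine ⟨W, σ, ⟨hvp, hσw⟩, ?_, fun u hu => hu.1, hσm, ?_, ?_, fun u hu => hu.2⟩
  · exact fun u hu => ⟨hu.1, σ, hσm, hu.2⟩
  · intro u hu huβ
    exact prepend u (σ u) hu (fun _ => rfl)
      (fun h => absurd huβ (fun h' => G.posOf_opp_disj hβ h' h))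
      (G.mv_mem (hσm u huβ)).2
  · intro u w hu huo hm
    exact prepend u w hu
      (fun h => absurd h (fun h' => G.posOf_opp_disj hβ h' huo))
      (fun _ => hm) (G.mv_mem hm).2

lemma win_disjoint (G : PGame V) {α : ℕ} (hα : α = 0 ∨ α = 1) {v : V}
    (h1 : v ∈ G.Win α) (h2 : v ∈ G.Win (1 - α)) : False := by
  classical
  obtain ⟨hp, σa, hma, hwa⟩ := h1
  obtain ⟨-, σb, hmb, hwb⟩ := h2
  have hop : 1 - (1 - α) = α := by rcases hα with rfl | rfl <;> rfl
  rw [hop] at hwb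
  set π : ℕ → V := fun n =>
    Nat.rec v (fun _ ih => if ih ∈ G.posOf α then σa ih else σb ih) n with hπ
  have hstep : ∀ i, π (i + 1) = if π i ∈ G.posOf α then σa (π i) else σb (π i) :=
    fun i => rfl
  have hca : ∀ i, (π i ∈ G.posOf α → π (i + 1) = σa (π i)) ∧
      (π i ∈ G.posOf (1 - α) → G.mv (π i) (π (i + 1))) := by
    intro i
    constructor
    · intro h
      rw [hstep, if_pos h]
    · intro h
      have h' : π i ∉ G.posOf α := fun h' => G.posOf_opp_disj hα h' h
      rw [hstep, if_neg h']
      exact hmb _ h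
  have hcb : ∀ i, (π i ∈ G.posOf (1 - α) → π (i + 1) = σb (π i)) ∧
      (π i ∈ G.posOf α → G.mv (π i) (π (i + 1))) := by
    intro i
    constructor
    · intro h
      have h' : π i ∉ G.posOf α := fun h' => G.posOf_opp_disj hα h' h
      rw [hstep, if_neg h']
    · intro h
      rw [hstep, if_pos h]
      exact hma _ h
  have hla := hwa π rfl hca
  have hlb := hwb π rfl hcb
  rw [hla] at hlb
  rcases hα with rfl | rfl <;> simp at hlb

end PGame

/-- Let `D` be an `α`-dominion in `G` and `D★ := atr^α(D)`. Then `D★ ⊆ Wn_α(G)` and,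
for each player `β`, the winning region of `β` in the subgame `G ∖ D★` is exactly
`Wn_β(G) ∖ D★`. -/
theorem dominion_decomposition {V : Type*} (G : PGame V) (α : ℕ) (hα : α = 0 ∨ α = 1)
    (D : Set V) (hD : G.Dominion α D) :
    G.atr α D ⊆ G.Win α ∧
    ∀ β : ℕ, β = 0 ∨ β = 1 →
      (G.sub (G.atr α D)).Win β = G.Win β \ G.atr α D := by
  classical
  obtain ⟨σA, hσAm, hσAw⟩ := G.exists_attractor_strategy hα hD
  have hDpos : D ⊆ G.pos := hD.1
  have hAp : G.atr α D ⊆ G.pos := G.atr_subset_pos α hDpos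
  have hsubP : G.subPos (G.atr α D) = G.pos \ G.atr α D := G.subPos_atr hα D
  have part1 : G.atr α D ⊆ G.Win α := by
    intro v hv
    refine ⟨hAp hv, σA, hσAm, fun π h0 hc => ?_⟩
    exact (hσAw π (by rw [h0]; exact hv)
      (fun i => ⟨fun _ h => (hc i).1 h, (hc i).2⟩)).2
  refine ⟨part1, fun β hβ => ?_⟩
  ext u
  constructor
  · -- winning in the subgame implies winning in `G`
    intro hu
    obtain ⟨hup, σ', hm', hw'⟩ := hu
    have husub : u ∈ G.subPos (G.atr α D) := by
      rw [← G.sub_pos]; exact hup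
    have hupos : u ∈ G.pos := (G.subPos_subset _ husub).1
    have huA : u ∉ G.atr α D := by
      have h := husub; rw [hsubP] at h; exact h.2
    refine ⟨?_, huA⟩
    by_cases hcase : β = α
    · subst hcase
      set σc : V → V := fun w =>
        if w ∈ G.atr β D then σA w
        else if w ∈ (G.sub (G.atr β D)).posOf β then σ' w
        else if h : w ∈ G.pos then (G.leftTotal w h).choose else w with hσc
      have hσc1 : ∀ w, w ∈ G.atr β D → σc w = σA w := by
        intro w h; simp only [hσc]; rw [if_pos h]
      have hσc2 : ∀ w, w ∉ G.atr β D → w ∈ (G.sub (G.atr β D)).posOf β →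
          σc w = σ' w := by
        intro w h1 h2; simp only [hσc]; rw [if_neg h1, if_pos h2]
      refine ⟨hupos, σc, ?_, ?_⟩
      · intro w hw
        by_cases h1 : w ∈ G.atr β D
        · rw [hσc1 w h1]; exact hσAm w hw
        · by_cases h2 : w ∈ (G.sub (G.atr β D)).posOf β
          · rw [hσc2 w h1 h2]
            exact (hm' w h2).1
          · have hwp : w ∈ G.pos := G.posOf_subset_pos β hw
            simp only [hσc]; rw [if_neg h1, if_neg h2, dif_pos hwp]
            exact (G.leftTotal w hwp).choose_spec
      · intro π h0 hc
        by_cases hnever : ∀ i, π i ∉ G.atr β D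
        · have hallsub : ∀ i, π i ∈ G.subPos (G.atr β D) := by
            intro i
            induction i with
            | zero => rw [h0]; exact husub
            | succ i ih =>
              have hip : π i ∈ G.pos := (G.subPos_subset _ ih).1
              rcases G.pos_cases hβ hip with hiβ | hio
              · have hmem : π i ∈ (G.sub (G.atr β D)).posOf β := by
                  rw [G.sub_posOf]; exact ⟨hiβ, ih⟩
                have heq : π (i + 1) = σ' (π i) := by
                  rw [(hc i).1 hiβ, hσc2 _ (hnever i) hmem]
                rw [heq]
                exact ((hm' (π i) hmem).2).2
              · have hm := (hc i).2 hio
                rw [hsubP]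
                exact ⟨(G.mv_mem hm).2, hnever (i + 1)⟩
          have hconsSub : ∀ i,
              (π i ∈ (G.sub (G.atr β D)).posOf β → π (i + 1) = σ' (π i)) ∧
              (π i ∈ (G.sub (G.atr β D)).posOf (1 - β) →
                (G.sub (G.atr β D)).mv (π i) (π (i + 1))) := by
            intro i
            constructor
            · intro h
              have hiβ : π i ∈ G.posOf β := by
                rw [G.sub_posOf] at h; exact h.1
              rw [(hc i).1 hiβ, hσc2 _ (hnever i) h]
            · intro h
              rw [G.sub_posOf] at h
              exact ⟨(hc i).2 h.1, hallsub i, hallsub (i + 1)⟩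
          exact hw' π h0 hconsSub
        · push_neg at hnever
          obtain ⟨N, hN⟩ := hnever
          set π' : ℕ → V := fun j => π (j + N) with hπ'
          have h0' : π' 0 ∈ G.atr β D := by
            show π (0 + N) ∈ _; rw [Nat.zero_add]; exact hN
          have hc' : ∀ j,
              (π' j ∈ G.atr β D → π' j ∈ G.posOf β → π' (j + 1) = σA (π' j)) ∧
              (π' j ∈ G.posOf (1 - β) → G.mv (π' j) (π' (j + 1))) := by
            intro j
            have he : j + 1 + N = j + N + 1 := by omega
            constructor
            · intro h1 h2
              show π (j + 1 + N) = σA (π (j + N))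
              rw [he, (hc (j + N)).1 h2, hσc1 _ h1]
            · intro h1
              show G.mv (π (j + N)) (π (j + 1 + N))
              rw [he]
              exact (hc (j + N)).2 h1
          have hl := (hσAw π' h0' hc').2
          rw [← Filter.limsup_nat_add (fun i => G.pr (π i)) N]
          exact hl
    · -- `β` is the opponent `1 - α`
      have hβα : β = 1 - α := by omega
      have hps : G.posOf (1 - β) = G.posOf α := by
        rw [show 1 - β = α by omega]
      set σc : V → V := fun w =>
        if w ∈ (G.sub (G.atr α D)).posOf β then σ' w
        else if h : w ∈ G.pos then (G.leftTotal w h).choose else w with hσc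
      have hσc1 : ∀ w, w ∈ (G.sub (G.atr α D)).posOf β → σc w = σ' w := by
        intro w h; simp only [hσc]; rw [if_pos h]
      refine ⟨hupos, σc, ?_, ?_⟩
      · intro w hw
        by_cases h1 : w ∈ (G.sub (G.atr α D)).posOf β
        · rw [hσc1 w h1]
          exact (hm' w h1).1
        · have hwp : w ∈ G.pos := G.posOf_subset_pos β hw
          simp only [hσc]; rw [if_neg h1, dif_pos hwp]
          exact (G.leftTotal w hwp).choose_spec
      · intro π h0 hc
        have hallsub : ∀ i, π i ∈ G.subPos (G.atr α D) := by
          intro i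
          induction i with
          | zero => rw [h0]; exact husub
          | succ i ih =>
            have hip : π i ∈ G.pos := (G.subPos_subset _ ih).1
            have hiA : π i ∉ G.atr α D := by
              have h := ih; rw [hsubP] at h; exact h.2
            rcases G.pos_cases hβ hip with hiβ | hio
            · have hmem : π i ∈ (G.sub (G.atr α D)).posOf β := by
                rw [G.sub_posOf]; exact ⟨hiβ, ih⟩
              have heq : π (i + 1) = σ' (π i) := by
                rw [(hc i).1 hiβ, hσc1 _ hmem]
              rw [heq]
              exact ((hm' (π i) hmem).2).2
            · have hm := (hc i).2 hio
              have hiα : π i ∈ G.posOf α := by rw [← hps]; exact hio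
              rw [hsubP]
              exact ⟨(G.mv_mem hm).2, G.noescape α D hiα hiA hm⟩
        have hconsSub : ∀ i,
            (π i ∈ (G.sub (G.atr α D)).posOf β → π (i + 1) = σ' (π i)) ∧
            (π i ∈ (G.sub (G.atr α D)).posOf (1 - β) →
              (G.sub (G.atr α D)).mv (π i) (π (i + 1))) := by
          intro i
          constructor
          · intro h
            have hiβ : π i ∈ G.posOf β := by
              rw [G.sub_posOf] at h; exact h.1
            rw [(hc i).1 hiβ, hσc1 _ h]
          · intro h
            rw [G.sub_posOf] at h
            exact ⟨(hc i).2 h.1, hallsub i, hallsub (i + 1)⟩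
        exact hw' π h0 hconsSub
  · -- winning in `G` outside the attractor implies winning in the subgame
    rintro ⟨huw, huA⟩
    obtain ⟨W, σ, huW, hWwin, hWpos, hσm, hclβ, hclo, hWplay⟩ := G.win_forward hβ huw
    have hW'sub : ∀ w, w ∈ W → w ∉ G.atr α D → w ∈ G.subPos (G.atr α D) := by
      intro w h1 h2; rw [hsubP]; exact ⟨hWpos h1, h2⟩
    have hστ : ∀ w, w ∈ W → w ∉ G.atr α D → w ∈ G.posOf β →
        σ w ∈ W ∧ σ w ∉ G.atr α D := by
      intro w h1 h2 h3
      refine ⟨hclβ w h1 h3, ?_⟩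
      by_cases hcase : β = α
      · subst hcase
        exact G.noescape β D h3 h2 (hσm w h3)
      · have hβα : β = 1 - α := by omega
        intro hmem
        refine G.win_disjoint hα (part1 hmem) ?_
        rw [← hβα]
        exact hWwin (hclβ w h1 h3)
    set σc : V → V := fun w =>
      if w ∈ W ∧ w ∉ G.atr α D ∧ w ∈ G.posOf β then σ w
      else if h : w ∈ (G.sub (G.atr α D)).pos then
        ((G.sub (G.atr α D)).leftTotal w h).choose else w with hσc
    have husub : u ∈ G.subPos (G.atr α D) := hW'sub u huW huA
    refine ⟨?_, σc, ?_, ?_⟩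
    · show u ∈ (G.sub (G.atr α D)).pos
      rw [G.sub_pos]; exact husub
    · intro w hw
      by_cases h1 : w ∈ W ∧ w ∉ G.atr α D ∧ w ∈ G.posOf β
      · have heq : σc w = σ w := by simp only [hσc]; rw [if_pos h1]
        rw [heq]
        obtain ⟨hσW, hσA⟩ := hστ w h1.1 h1.2.1 h1.2.2
        have hwsub : w ∈ G.subPos (G.atr α D) := (G.sub_posOf _ β ▸ hw).2
        exact ⟨hσm w h1.2.2, hwsub, hW'sub _ hσW hσA⟩
      · have hwp : w ∈ (G.sub (G.atr α D)).pos := by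
          rw [G.sub_pos]; exact (G.sub_posOf _ β ▸ hw).2
        simp only [hσc]; rw [if_neg h1, dif_pos hwp]
        exact ((G.sub (G.atr α D)).leftTotal w hwp).choose_spec
    · intro π h0 hc
      have hWall : ∀ i, π i ∈ W ∧ π i ∉ G.atr α D := by
        intro i
        induction i with
        | zero => rw [h0]; exact ⟨huW, huA⟩
        | succ i ih =>
          rcases G.pos_cases hβ (hWpos ih.1) with hiβ | hio
          · have hmem : π i ∈ (G.sub (G.atr α D)).posOf β := by
              rw [G.sub_posOf]; exact ⟨hiβ, hW'sub _ ih.1 ih.2⟩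
            have heq : π (i + 1) = σ (π i) := by
              rw [(hc i).1 hmem]; simp only [hσc]
              rw [if_pos ⟨ih.1, ih.2, hiβ⟩]
            rw [heq]
            exact hστ _ ih.1 ih.2 hiβ
          · have hmem : π i ∈ (G.sub (G.atr α D)).posOf (1 - β) := by
              rw [G.sub_posOf]; exact ⟨hio, hW'sub _ ih.1 ih.2⟩
            obtain ⟨hm, -, hsub⟩ := (hc i).2 hmem
            refine ⟨hclo _ _ ih.1 hio hm, ?_⟩
            have h := hsub; rw [hsubP] at h; exact h.2
      have hcons : ∀ i, (π i ∈ G.posOf β → π (i + 1) = σ (π i)) ∧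
          (π i ∈ G.posOf (1 - β) → G.mv (π i) (π (i + 1))) := by
        intro i
        constructor
        · intro h
          have hmem : π i ∈ (G.sub (G.atr α D)).posOf β := by
            rw [G.sub_posOf]; exact ⟨h, hW'sub _ (hWall i).1 (hWall i).2⟩
          rw [(hc i).1 hmem]; simp only [hσc]
          rw [if_pos ⟨(hWall i).1, (hWall i).2, h⟩]
        · intro h
          have hmem : π i ∈ (G.sub (G.atr α D)).posOf (1 - β) := by
            rw [G.sub_posOf]; exact ⟨h, hW'sub _ (hWall i).1 (hWall i).2⟩
          exact ((hc i).2 hmem).1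
      exact hWplay u huW π h0 hcons
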